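/- For d ≥ 3, let a_1, ..., a_{d-1} ∈ ℝ^{d-1} be defined by: a_i has entry d√d − 2√d − 1 in position i and −√d − 1 elsewhere, and let a_d have all entries equal to d − 1. Then for all 1 ≤ i < j ≤ d, the norm |a_i + a_j| = (d−1)√(2(d−2)) and |a_i − a_j| = (d−1)√(2d). -/

import Mathlib

/-!
With `s = √d`, `𝟙` the all-ones vector and `e_k` the standard basis of `ℝ^{d-1}`, the points are
`a_i = -(s + 1) 𝟙 + (d - 1) s e_i` for `i < d - 1` and `a_{d-1} = (d - 1) 𝟙`. Using `s² = d`, they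
form a regular simplex centred at the origin: `‖a_i‖² = (d - 1)³` and `⟪a_i, a_j⟫ = -(d - 1)²` for
`i ≠ j`. Hence `‖a_i ± a_j‖² = 2 (d - 1)³ ∓ 2 (d - 1)²`, which are the two claimed squares.
-/

open Real

section ConstAddSingle

variable {n : ℕ}

theorem inner_const_add_single (α β γ δ : ℝ) (i j : Fin n) :
    inner ℝ (α • WithLp.toLp 2 (1 : Fin n → ℝ) + β • EuclideanSpace.single i 1)
      (γ • WithLp.toLp 2 1 + δ • EuclideanSpace.single j 1)
      = n * α * γ + α * δ + β * γ + if i = j then β * δ else 0 := by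
  simp [inner_add_left, inner_add_right, PiLp.inner_apply]
  split_ifs <;> ring

theorem inner_const_add_single_const (α β γ : ℝ) (i : Fin n) :
    inner ℝ (α • WithLp.toLp 2 (1 : Fin n → ℝ) + β • EuclideanSpace.single i 1)
      (γ • WithLp.toLp 2 1) = n * α * γ + β * γ := by
  simp [inner_add_left, PiLp.inner_apply]
  ring

theorem inner_const_const (α γ : ℝ) :
    inner ℝ (α • WithLp.toLp 2 (1 : Fin n → ℝ)) (γ • WithLp.toLp 2 1) = n * α * γ := by
  simp [PiLp.inner_apply]
  ring

end ConstAddSingle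

noncomputable def simplexVertex (d : ℕ) (i : Fin d) : EuclideanSpace ℝ (Fin (d - 1)) :=
  if h : (i : ℕ) < d - 1 then
    (-(√d + 1)) • WithLp.toLp 2 1 + ((d - 1) * √d) • EuclideanSpace.single ⟨i, h⟩ 1
  else ((d : ℝ) - 1) • WithLp.toLp 2 1

section SimplexVertex

variable {d : ℕ}

theorem simplexVertex_eq {a : Fin d → EuclideanSpace ℝ (Fin (d - 1))}
    (ha : ∀ i : Fin d, ∀ k : Fin (d - 1),
      a i k = if (i : ℕ) = d - 1 then (d : ℝ) - 1
        else if (k : ℕ) = (i : ℕ) then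
          d * Real.sqrt d - 2 * Real.sqrt d - 1
        else - Real.sqrt d - 1) :
    a = simplexVertex d := by
  ext i k
  rw [ha, simplexVertex]
  split_ifs <;> simp_all [Fin.ext_iff] <;> first | omega | ring

theorem norm_simplexVertex_sq (i : Fin d) : ‖simplexVertex d i‖ ^ 2 = ((d : ℝ) - 1) ^ 3 := by
  have hs : √(d : ℝ) ^ 2 = d := sq_sqrt d.cast_nonneg
  rw [← real_inner_self_eq_norm_sq, simplexVertex]
  split_ifs
  · rw [inner_const_add_single, if_pos rfl, Nat.cast_pred i.pos]
    linear_combination (d - 1 : ℝ) * (d - 2) * hs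
  · rw [inner_const_const, Nat.cast_pred i.pos]
    ring

theorem inner_simplexVertex_of_ne {i j : Fin d} (hij : i ≠ j) :
    inner ℝ (simplexVertex d i) (simplexVertex d j) = -((d : ℝ) - 1) ^ 2 := by
  have hs : √(d : ℝ) ^ 2 = d := sq_sqrt d.cast_nonneg
  have hcast : ((d - 1 : ℕ) : ℝ) = d - 1 := Nat.cast_pred i.pos
  have key : ∀ i j : Fin d, i ≠ j → (i : ℕ) < d - 1 →
      inner ℝ (simplexVertex d i) (simplexVertex d j) = -((d : ℝ) - 1) ^ 2 := by
    intro i j hij hi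
    rw [simplexVertex, simplexVertex, dif_pos hi]
    split_ifs with hj
    · rw [inner_const_add_single, if_neg (by simpa [Fin.ext_iff] using hij), hcast]
      linear_combination (1 - (d : ℝ)) * hs
    · rw [inner_const_add_single_const, hcast]
      ring
  by_cases hi : (i : ℕ) < d - 1
  · exact key i j hij hi
  · rw [real_inner_comm]
    exact key j i hij.symm (by have := Fin.val_ne_of_ne hij; omega)

end SimplexVertex

theorem stmt9 (d : ℕ) (a : Fin d → EuclideanSpace ℝ (Fin (d - 1)))
    (ha : ∀ i : Fin d, ∀ k : Fin (d - 1),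
      a i k = if (i : ℕ) = d - 1 then (d : ℝ) - 1
        else if (k : ℕ) = (i : ℕ) then
          d * Real.sqrt d - 2 * Real.sqrt d - 1
        else - Real.sqrt d - 1) :
    ∀ i j : Fin d, i ≠ j →
      ‖a i + a j‖ = ((d : ℝ) - 1) * Real.sqrt (2 * ((d : ℝ) - 2)) ∧
      ‖a i - a j‖ = ((d : ℝ) - 1) * Real.sqrt (2 * (d : ℝ)) := by
  intro i j hij
  obtain rfl := simplexVertex_eq ha
  have hd : (2 : ℝ) ≤ d := by
    have := Fin.val_ne_of_ne hij
    exact_mod_cast (by omega : 2 ≤ d)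
  have hi := norm_simplexVertex_sq i
  have hj := norm_simplexVertex_sq j
  have hinner := inner_simplexVertex_of_ne hij
  have hc : 0 ≤ (d : ℝ) - 1 := by linarith
  constructor
  · rw [← pow_left_inj₀ (norm_nonneg _) (mul_nonneg hc (sqrt_nonneg _)) two_ne_zero,
      norm_add_sq_real, mul_pow, sq_sqrt (by linarith)]
    linear_combination hi + hj + 2 * hinner
  · rw [← pow_left_inj₀ (norm_nonneg _) (mul_nonneg hc (sqrt_nonneg _)) two_ne_zero,
      norm_sub_sq_real, mul_pow, sq_sqrt (by linarith)]
    linear_combination hi + hj - 2 * hinner
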